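/- arXiv:2310.03389 — 5 statements merged into one kernel-verified Lean document; each statement's English description precedes it below -/
import Mathlib

section
/- Let $(a_{jk})_{j,k\in\mathbb{Z}}$ be a real (or complex) matrix defining a bounded linear operator $A:\ell^\infty(\mathbb{Z})\to\ell^1(\mathbb{Z})$ with norm $C$, i.e. $\sum_j |\sum_k a_{jk}\zeta_k| \le C \sup_k|\zeta_k|$ for all bounded sequences $\zeta$. Then for every $m\in\mathbb{Z}$ the sum along the $m$-th diagonal satisfies $\sum_{j-k=m} |a_{jk}| \le C$. -/
/-!
Test the operator on sign vectors: `ζ = ε` on a finite set `S` of columns and `0` elsewhere,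
with `ε ∈ {±1}^S`. Flipping the single sign `ε_{j-m}` changes the `j`-th row sum
`∑_k a_{jk} ε_k` by `±2 a_{j,j-m}`, and sign flipping permutes `{±1}^S`; so the average over
`ε` of `|∑_k a_{jk} ε_k|` is at least `|a_{j,j-m}|`. Averaging the bound `∑_j |∑_k a_{jk} ε_k| ≤ C`
over `ε` therefore bounds every finite partial sum of the `m`-th diagonal by `C`. This is the
real counterpart of averaging over the modulations `e^{i(j-k-m)x}`.
-/

section Signs

variable {R : Type*} [CommRing R] [LinearOrder R] [IsStrictOrderedRing R]

lemma abs_intCast_units (u : ℤˣ) : |((u : ℤ) : R)| = 1 :=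
  AbsoluteValue.abs.map_units_intCast u

theorem card_mul_abs_le_sum_abs_sum_signs {ι : Type*} [Fintype ι] [DecidableEq ι]
    (d : ι → R) (i : ι) :
    Fintype.card (ι → ℤˣ) * |d i| ≤ ∑ ε : ι → ℤˣ, |∑ k, ((ε k : ℤ) : R) * d k| := by
  set F : (ι → ℤˣ) → R := fun ε => ∑ k, ((ε k : ℤ) : R) * d k
  set flip : ι → ℤˣ := Pi.mulSingle i (-1)
  have hflip : ∀ ε, |F ε - F (ε * flip)| = 2 * |d i| := by
    intro ε
    have : F ε - F (ε * flip) = 2 * ((ε i : ℤ) : R) * d i := by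
      simp only [F, ← Finset.sum_sub_distrib, ← sub_mul]
      rw [Finset.sum_eq_single i]
      · simp only [flip, Pi.mul_apply, Pi.mulSingle_eq_same, mul_neg, mul_one, Units.val_neg,
          Int.cast_neg]
        ring
      · intro k _ hk
        simp [flip, Pi.mulSingle_eq_of_ne hk]
      · simp
    rw [this, abs_mul, abs_mul, abs_intCast_units, abs_two, mul_one]
  have hsum_flip : ∑ ε, |F (ε * flip)| = ∑ ε, |F ε| :=
    Fintype.sum_equiv (Equiv.mulRight flip) _ _ fun _ => rfl
  refine le_of_mul_le_mul_right ?_ (two_pos : (0 : R) < 2)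
  calc Fintype.card (ι → ℤˣ) * |d i| * 2 = ∑ ε, |F ε - F (ε * flip)| := by
        rw [Finset.sum_congr rfl fun ε _ => hflip ε, Finset.sum_const, Finset.card_univ,
          nsmul_eq_mul]
        ring
    _ ≤ ∑ ε, (|F ε| + |F (ε * flip)|) := Finset.sum_le_sum fun ε _ => abs_sub _ _
    _ = (∑ ε, |F ε|) * 2 := by rw [Finset.sum_add_distrib, hsum_flip]; ring

theorem sum_abs_apply_le_of_forall_signs {ι κ : Type*} [Fintype ι] [Fintype κ] [DecidableEq κ]
    (b : ι → κ → R) (σ : ι → κ) {C : R}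
    (h : ∀ ε : κ → ℤˣ, ∑ j, |∑ k, ((ε k : ℤ) : R) * b j k| ≤ C) :
    ∑ j, |b j (σ j)| ≤ C := by
  have hcard : (0 : R) < Fintype.card (κ → ℤˣ) := by exact_mod_cast Fintype.card_pos
  refine le_of_mul_le_mul_left ?_ hcard
  calc Fintype.card (κ → ℤˣ) * ∑ j, |b j (σ j)|
      ≤ ∑ j, ∑ ε : κ → ℤˣ, |∑ k, ((ε k : ℤ) : R) * b j k| := by
        rw [Finset.mul_sum]
        exact Finset.sum_le_sum fun j _ => card_mul_abs_le_sum_abs_sum_signs (b j) (σ j)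
    _ = ∑ ε : κ → ℤˣ, ∑ j, |∑ k, ((ε k : ℤ) : R) * b j k| := Finset.sum_comm
    _ ≤ ∑ _ε : κ → ℤˣ, C := Finset.sum_le_sum fun ε _ => h ε
    _ = Fintype.card (κ → ℤˣ) * C := by simp

end Signs

section SignExtension

variable {ι : Type*} [DecidableEq ι] (S : Finset ι) (ε : S → ℤˣ)

def signExtension (k : ι) : ℝ :=
  if h : k ∈ S then ((ε ⟨k, h⟩ : ℤ) : ℝ) else 0

lemma abs_signExtension_le_one (k : ι) : |signExtension S ε k| ≤ 1 := by
  unfold signExtension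
  split_ifs
  · exact (abs_intCast_units _).le
  · simp

lemma tsum_mul_signExtension (b : ι → ℝ) :
    ∑' k, b k * signExtension S ε k = ∑ k : S, ((ε k : ℤ) : ℝ) * b k := by
  rw [tsum_eq_sum (s := S) fun k hk => by simp [signExtension, hk], ← Finset.sum_coe_sort]
  refine Finset.sum_congr rfl fun k _ => ?_
  simp [signExtension, mul_comm]

end SignExtension

/-- If the matrix `(a j k)` defines a bounded operator
`ℓ∞(ℤ) → ℓ¹(ℤ)` with norm `C`, then each diagonal sum `∑_{j-k=m} |a j k|` is `≤ C`. -/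
theorem stmt_0 (a : ℤ → ℤ → ℝ) (C : ℝ)
    (hbd : ∀ (ζ : ℤ → ℝ) (M : ℝ), (∀ k, |ζ k| ≤ M) →
      (∀ j, Summable fun k => a j k * ζ k) ∧
      Summable (fun j => |∑' k, a j k * ζ k|) ∧
      ∑' j, |∑' k, a j k * ζ k| ≤ C * M) :
    ∀ m : ℤ, Summable (fun k => |a (k + m) k|) ∧ ∑' k : ℤ, |a (k + m) k| ≤ C := by
  intro m
  have hfinite : ∀ S : Finset ℤ, ∑ k ∈ S, |a (k + m) k| ≤ C := by
    intro S
    rw [← Finset.sum_coe_sort]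
    refine sum_abs_apply_le_of_forall_signs (fun j k : S => a (j + m) k) id fun ε => ?_
    obtain ⟨-, hsum, hle⟩ := hbd (signExtension S ε) 1 (abs_signExtension_le_one S ε)
    have hrow (j : ℤ) := tsum_mul_signExtension S ε (a j)
    simp only [hrow, mul_one] at hsum hle
    rw [← (Equiv.addRight m).summable_iff] at hsum
    rw [← (Equiv.addRight m).tsum_eq] at hle
    exact (Finset.sum_coe_sort S _).trans_le
      ((hsum.sum_le_tsum S fun _ _ => abs_nonneg _).trans hle)
  have hsummable : Summable fun k => |a (k + m) k| :=
    summable_of_sum_le (fun k => abs_nonneg _) hfinite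
  exact ⟨hsummable, hsummable.tsum_le_of_sum_le hfinite⟩
end

section
/- Let $\rho:(0,\infty)\to(0,\infty)$ and $\rho'(t)=t/\rho(t)$. Suppose $\rho$ is increasing, $\rho'$ is increasing (i.e. $\rho$ is quasi-concave style), and both $\rho$ and $\rho'$ have range all of $(0,\infty)$. Then there exists an increasing sequence $(\tau_k)_{k\in\mathbb{Z}}$ of positive reals with $\tau_0=1$ such that $\min(1,\tau_j/\tau_k)\cdot\rho(\tau_k)/\rho(\tau_j) \le 2^{-|j-k|}$ for all $j,k\in\mathbb{Z}$. -/
/-!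
Starting from `τ₀ = 1`, choose each `τₖ₊₁` so that both `ρ` and `ρ' t = t / ρ t` at least double
from `τₖ`, and each `τₖ₋₁` so that both at least halve; this is possible because both functions
are monotone with range `(0, ∞)`, and it makes `τ` strictly increasing since `ρ'` is.
For `k ≤ j` the doubling of `ρ` gives `ρ(τₖ)/ρ(τⱼ) ≤ 2^(k-j)`, which bounds the product since
`min ≤ 1`; for `j ≤ k` the product is at most `τⱼ/τₖ · ρ(τₖ)/ρ(τⱼ) = ρ'(τⱼ)/ρ'(τₖ) ≤ 2^(j-k)`.
-/

theorem MonotoneOn.exists_le_apply_and_le_apply {α β γ : Type*} [LinearOrder α] [Preorder β]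
    [Preorder γ] {φ : α → β} {ψ : α → γ} {s : Set α} (hφ : MonotoneOn φ s)
    (hψ : MonotoneOn ψ s) {a : β} {b : γ} (ha : ∃ x ∈ s, a ≤ φ x) (hb : ∃ y ∈ s, b ≤ ψ y) :
    ∃ z ∈ s, a ≤ φ z ∧ b ≤ ψ z := by
  obtain ⟨x, hx, hax⟩ := ha
  obtain ⟨y, hy, hby⟩ := hb
  have hxy : max x y ∈ s := by rcases max_choice x y with h | h <;> rw [h] <;> assumption
  exact ⟨max x y, hxy, hax.trans (hφ hx hxy (le_max_left x y)),
    hby.trans (hψ hy hxy (le_max_right x y))⟩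

theorem MonotoneOn.exists_apply_le_and_apply_le {α β γ : Type*} [LinearOrder α] [Preorder β]
    [Preorder γ] {φ : α → β} {ψ : α → γ} {s : Set α} (hφ : MonotoneOn φ s)
    (hψ : MonotoneOn ψ s) {a : β} {b : γ} (ha : ∃ x ∈ s, φ x ≤ a) (hb : ∃ y ∈ s, ψ y ≤ b) :
    ∃ z ∈ s, φ z ≤ a ∧ ψ z ≤ b :=
  hφ.dual.exists_le_apply_and_le_apply hψ.dual ha hb

theorem exists_int_chain {α : Type*} {R : α → α → Prop} (hfwd : ∀ a, ∃ b, R a b)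
    (hbwd : ∀ b, ∃ a, R a b) (a₀ : α) : ∃ τ : ℤ → α, τ 0 = a₀ ∧ ∀ n, R (τ n) (τ (n + 1)) := by
  choose f hf using hfwd
  choose g hg using hbwd
  let τ : ℤ → α
    | .ofNat m => f^[m] a₀
    | .negSucc m => g^[m + 1] a₀
  refine ⟨τ, rfl, ?_⟩
  rintro (m | _ | m)
  · show R (f^[m] a₀) (f^[m + 1] a₀)
    rw [Function.iterate_succ_apply']
    exact hf _
  · exact hg a₀
  · show R (g^[m + 2] a₀) (g^[m + 1] a₀)
    rw [Function.iterate_succ_apply']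
    exact hg _

theorem le_mul_zpow_of_mul_le_succ {K : Type*} [Field K] [LinearOrder K] [IsStrictOrderedRing K]
    {c : K} (hc : 0 < c) {u : ℤ → K} (hu : ∀ n, c * u n ≤ u (n + 1)) {k j : ℤ} (hkj : k ≤ j) :
    c ^ (j - k) * u k ≤ u j := by
  induction j, hkj using Int.leInduction with
  | base => simp
  | succ j _ ih =>
    calc c ^ (j + 1 - k) * u k = c * (c ^ (j - k) * u k) := by
          rw [show j + 1 - k = j - k + 1 by ring, zpow_add_one₀ hc.ne']; ring
      _ ≤ c * u j := by gcongr
      _ ≤ u (j + 1) := hu j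

theorem div_le_zpow_of_mul_le_succ {K : Type*} [Field K] [LinearOrder K] [IsStrictOrderedRing K]
    {c : K} (hc : 0 < c) {u : ℤ → K} (hpos : ∀ n, 0 < u n) (hu : ∀ n, c * u n ≤ u (n + 1))
    {k j : ℤ} (hkj : k ≤ j) : u k / u j ≤ c ^ (k - j) := by
  rw [div_le_iff₀ (hpos j)]
  calc u k = c ^ (k - j) * (c ^ (j - k) * u k) := by
        rw [← mul_assoc, ← zpow_add₀ hc.ne', sub_add_sub_cancel, sub_self, zpow_zero, one_mul]
    _ ≤ c ^ (k - j) * u j := by gcongr; exact le_mul_zpow_of_mul_le_succ hc hu hkj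

theorem min_one_div_mul_div_le_zpow_neg_abs {K : Type*} [Field K] [LinearOrder K]
    [IsStrictOrderedRing K] {c : K} (hc : 0 < c) {a b : ℤ → K} (ha : ∀ n, 0 < a n)
    (hb : ∀ n, 0 < b n) (hab : ∀ n, c * b n ≤ b (n + 1))
    (hab' : ∀ n, c * (a n / b n) ≤ a (n + 1) / b (n + 1)) (j k : ℤ) :
    min 1 (a j / a k) * (b k / b j) ≤ c ^ (-|j - k|) := by
  have hbk := hb k
  have hbj := hb j
  rcases le_total k j with h | h
  · rw [abs_of_nonneg (sub_nonneg.2 h), neg_sub]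
    calc min 1 (a j / a k) * (b k / b j) ≤ 1 * (b k / b j) := by gcongr; exact min_le_left _ _
      _ ≤ c ^ (k - j) := by rw [one_mul]; exact div_le_zpow_of_mul_le_succ hc hb hab h
  · rw [abs_of_nonpos (sub_nonpos.2 h), neg_neg]
    have hak := ha k
    calc min 1 (a j / a k) * (b k / b j) ≤ a j / a k * (b k / b j) := by
          gcongr; exact min_le_right _ _
      _ = (a j / b j) / (a k / b k) := by field_simp
      _ ≤ c ^ (j - k) :=
          div_le_zpow_of_mul_le_succ hc (fun n => div_pos (ha n) (hb n)) hab' h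

/-- existence of the Janson sequence `τ` with geometric decay of
`min(1, τⱼ/τₖ) · ρ(τₖ)/ρ(τⱼ)`. -/
theorem stmt_1 (ρ : ℝ → ℝ) (hpos : ∀ t > 0, 0 < ρ t)
    (hmono : MonotoneOn ρ (Set.Ioi (0 : ℝ)))
    (hmono' : MonotoneOn (fun t => t / ρ t) (Set.Ioi (0 : ℝ)))
    (hsurj : ∀ y > 0, ∃ t > 0, ρ t = y)
    (hsurj' : ∀ y > 0, ∃ t > 0, t / ρ t = y) :
    ∃ τ : ℤ → ℝ, StrictMono τ ∧ (∀ k, 0 < τ k) ∧ τ 0 = 1 ∧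
      ∀ j k : ℤ, min 1 (τ j / τ k) * (ρ (τ k) / ρ (τ j)) ≤ (2 : ℝ) ^ (-|j - k|) := by
  set ρ' : ℝ → ℝ := fun t => t / ρ t
  have hpos' : ∀ t > 0, 0 < ρ' t := fun t ht => div_pos ht (hpos t ht)
  have hfwd (x : Set.Ioi (0 : ℝ)) :
      ∃ y : Set.Ioi (0 : ℝ), 2 * ρ x ≤ ρ y ∧ 2 * ρ' x ≤ ρ' y := by
    obtain ⟨t, ht, hρt⟩ := hsurj _ (mul_pos two_pos (hpos x x.2))
    obtain ⟨t', ht', hρt'⟩ := hsurj' _ (mul_pos two_pos (hpos' x x.2))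
    obtain ⟨y, hy, h⟩ :=
      hmono.exists_le_apply_and_le_apply hmono' ⟨t, ht, hρt.ge⟩ ⟨t', ht', hρt'.ge⟩
    exact ⟨⟨y, hy⟩, h⟩
  have hbwd (x : Set.Ioi (0 : ℝ)) :
      ∃ y : Set.Ioi (0 : ℝ), 2 * ρ y ≤ ρ x ∧ 2 * ρ' y ≤ ρ' x := by
    obtain ⟨t, ht, hρt⟩ := hsurj _ (half_pos (hpos x x.2))
    obtain ⟨t', ht', hρt'⟩ := hsurj' _ (half_pos (hpos' x x.2))
    obtain ⟨y, hy, hρy, hρ'y⟩ :=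
      hmono.exists_apply_le_and_apply_le hmono' ⟨t, ht, hρt.le⟩ ⟨t', ht', hρt'.le⟩
    exact ⟨⟨y, hy⟩, by linarith, by linarith⟩
  obtain ⟨σ, hσ0, hσ⟩ := exists_int_chain hfwd hbwd ⟨1, Set.mem_Ioi.2 one_pos⟩
  have hstrict : StrictMono fun n => (σ n : ℝ) := strictMono_int_of_lt_succ fun n =>
    hmono'.reflect_lt (σ n).2 (σ (n + 1)).2 (by linarith [(hσ n).2, hpos' _ (σ n).2])
  exact ⟨fun n => σ n, hstrict, fun n => (σ n).2, congrArg Subtype.val hσ0,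
    min_one_div_mul_div_le_zpow_neg_abs two_pos (fun n => (σ n).2) (fun n => hpos _ (σ n).2)
      (fun n => (hσ n).1) (fun n => (hσ n).2)⟩
end

section
/- Let $\lambda>1$, $\bar w=(w^0,w^1)$ positive weights on a countable index set $I$, $e_k=\{n: w^0_n\le\lambda^k w^1_n<\lambda w^0_n\}$, and let $z=(z_n)$ be nonnegative with $t_k=\sum_{n\in e_k} w^0_n z_n$. Then $\sum_k t_k = \sum_n w^0_n z_n$ and $\lambda^{-1}\sum_n w^1_n z_n \le \sum_k \lambda^{-k} t_k \le \sum_n w^1_n z_n$. -/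
/-!
Each index `n` lies in exactly one block `e k`, namely `k = ⌈log_λ (w⁰ₙ / w¹ₙ)⌉`, so the block sums
regroup the `w⁰`-weighted series without loss. On `e k` the defining inequalities read
`λ⁻¹ w¹ₙ < λ^{-k} w⁰ₙ ≤ w¹ₙ`, and summing these against `zₙ` gives the two-sided bound.
-/

open Real

theorem tsum_tsum_subtype_eq_tsum_of_iff {α ι κ : Type*} [AddCommGroup α] [UniformSpace α]
    [IsUniformAddGroup α] [CompleteSpace α] [T0Space α] (blk : ι → κ) (p : κ → ι → Prop)
    (hp : ∀ k n, p k n ↔ blk n = k) (F : κ → ι → α) (hF : Summable fun n => F (blk n) n) :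
    ∑' k, ∑' n : {n // p k n}, F k n = ∑' n, F (blk n) n := by
  let e : (Σ k, {n // p k n}) ≃ ι :=
    (Equiv.sigmaCongrRight fun k => Equiv.subtypeEquivRight (hp k)).trans
      (Equiv.sigmaFiberEquiv blk)
  have hfiber : ∀ σ : Σ k, {n // p k n}, F σ.1 σ.2 = F (blk (e σ)) (e σ) :=
    fun ⟨k, n, hn⟩ => by obtain rfl := (hp k n).1 hn; rfl
  have hsigma : Summable fun σ : Σ k, {n // p k n} => F σ.1 σ.2 :=
    (e.summable_iff.mpr hF).congr fun σ => (hfiber σ).symm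
  calc ∑' k, ∑' n : {n // p k n}, F k n = ∑' σ : Σ k, {n // p k n}, F σ.1 σ.2 :=
        hsigma.tsum_sigma.symm
    _ = ∑' n, F (blk n) n := (tsum_congr hfiber).trans (e.tsum_eq fun n => F (blk n) n)

noncomputable def blockIndex (lam a b : ℝ) : ℤ := ⌈logb lam (a / b)⌉

theorem le_zpow_mul_and_zpow_mul_lt_iff {lam a b : ℝ} (hlam : 1 < lam) (ha : 0 < a) (hb : 0 < b)
    (k : ℤ) : a ≤ lam ^ k * b ∧ lam ^ k * b < lam * a ↔ blockIndex lam a b = k := by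
  have hlam0 : 0 < lam := one_pos.trans hlam
  have hab : 0 < a / b := div_pos ha hb
  have hle : a ≤ lam ^ k * b ↔ blockIndex lam a b ≤ k := by
    rw [blockIndex, Int.ceil_le, logb_le_iff_le_rpow hlam hab, rpow_intCast, div_le_iff₀ hb]
  have hlt : lam ^ k * b < lam * a ↔ k ≤ blockIndex lam a b := by
    rw [blockIndex, ← Int.sub_one_lt_iff, Int.lt_ceil, lt_logb_iff_rpow_lt hlam hab, rpow_intCast,
      zpow_sub_one₀ hlam0.ne', lt_div_iff₀ hb, mul_right_comm, ← div_eq_mul_inv,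
      div_lt_iff₀' hlam0]
  rw [hle, hlt, le_antisymm_iff]

theorem zpow_neg_mul_le_of_le_zpow_mul {lam a b : ℝ} (hlam : 0 < lam) {k : ℤ}
    (h : a ≤ lam ^ k * b) : lam ^ (-k) * a ≤ b := by
  rwa [zpow_neg, inv_mul_le_iff₀ (zpow_pos hlam k)]

theorem inv_mul_le_zpow_neg_mul_of_zpow_mul_le {lam a b : ℝ} (hlam : 0 < lam) {k : ℤ}
    (h : lam ^ k * b ≤ lam * a) : lam⁻¹ * b ≤ lam ^ (-k) * a := by
  rwa [zpow_neg, inv_mul_le_iff₀ hlam, mul_left_comm, ← div_eq_inv_mul,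
    le_div_iff₀ (zpow_pos hlam k), mul_comm b]

theorem stmt_7_general {I : Type*} (lam : ℝ) (hlam : 1 < lam)
    (w0 w1 z : I → ℝ) (hw0 : ∀ n, 0 < w0 n) (hw1 : ∀ n, 0 < w1 n) (hz : ∀ n, 0 ≤ z n)
    (h0 : Summable fun n => w0 n * z n) (h1 : Summable fun n => w1 n * z n)
    (t : ℤ → ℝ)
    (ht : ∀ k, t k = ∑' n : {n : I // w0 n ≤ lam ^ k * w1 n ∧ lam ^ k * w1 n < lam * w0 n},
      w0 n.1 * z n.1) :
    (∑' k, t k) = (∑' n, w0 n * z n) ∧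
    lam⁻¹ * (∑' n, w1 n * z n) ≤ (∑' k : ℤ, lam ^ (-k) * t k) ∧
    (∑' k : ℤ, lam ^ (-k) * t k) ≤ (∑' n, w1 n * z n) := by
  have hlam0 : 0 < lam := one_pos.trans hlam
  let blk n := blockIndex lam (w0 n) (w1 n)
  have hblock k n := le_zpow_mul_and_zpow_mul_lt_iff (k := k) hlam (hw0 n) (hw1 n)
  have hupper n : lam ^ (-blk n) * (w0 n * z n) ≤ w1 n * z n := by
    rw [← mul_assoc]
    exact mul_le_mul_of_nonneg_right
      (zpow_neg_mul_le_of_le_zpow_mul hlam0 ((hblock _ n).2 rfl).1) (hz n)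
  have hlower n : lam⁻¹ * (w1 n * z n) ≤ lam ^ (-blk n) * (w0 n * z n) := by
    rw [← mul_assoc, ← mul_assoc]
    exact mul_le_mul_of_nonneg_right
      (inv_mul_le_zpow_neg_mul_of_zpow_mul_le hlam0 ((hblock _ n).2 rfl).2.le) (hz n)
  have hsum : Summable fun n => lam ^ (-blk n) * (w0 n * z n) :=
    .of_nonneg_of_le (fun n => by have := hw0 n; have := hz n; positivity) hupper h1
  have hweighted : ∑' k : ℤ, lam ^ (-k) * t k = ∑' n, lam ^ (-blk n) * (w0 n * z n) := by
    simp_rw [ht, ← tsum_mul_left]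
    exact tsum_tsum_subtype_eq_tsum_of_iff blk _ hblock (fun k n => lam ^ (-k) * (w0 n * z n)) hsum
  refine ⟨?_, ?_, ?_⟩
  · simp_rw [ht]
    exact tsum_tsum_subtype_eq_tsum_of_iff blk _ hblock (fun _ n => w0 n * z n) h0
  · rw [hweighted, ← tsum_mul_left]
    exact Summable.tsum_le_tsum hlower (h1.mul_left _) hsum
  · rw [hweighted]
    exact Summable.tsum_le_tsum hupper hsum h1

/-- the block sums `t k` over `e k` preserve the `w⁰`-weighted `ℓ¹` sum
exactly and the `w¹`-weighted `ℓ¹` sum up to a factor `λ`. -/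
theorem stmt_7 {I : Type*} [Countable I] (lam : ℝ) (hlam : 1 < lam)
    (w0 w1 z : I → ℝ) (hw0 : ∀ n, 0 < w0 n) (hw1 : ∀ n, 0 < w1 n) (hz : ∀ n, 0 ≤ z n)
    (h0 : Summable fun n => w0 n * z n) (h1 : Summable fun n => w1 n * z n)
    (t : ℤ → ℝ)
    (ht : ∀ k, t k = ∑' n : {n : I // w0 n ≤ lam ^ k * w1 n ∧ lam ^ k * w1 n < lam * w0 n},
      w0 n.1 * z n.1) :
    (∑' k, t k) = (∑' n, w0 n * z n) ∧
    lam⁻¹ * (∑' n, w1 n * z n) ≤ (∑' k : ℤ, lam ^ (-k) * t k) ∧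
    (∑' k : ℤ, lam ^ (-k) * t k) ≤ (∑' n, w1 n * z n) :=
  stmt_7_general lam hlam w0 w1 z hw0 hw1 hz h0 h1 t ht
end

section
/- Let $\bar X=(X_0,X_1)$ and $\bar Y=(Y_0,Y_1)$ be Banach couples, $\lambda>1$, and suppose $y = Tx$ where $T$ is nuclear from $\bar X$ to $\bar Y$ with nuclear norm $<1+\varepsilon$, i.e. $Ta=\sum_n \ell_n(a)\,b_n$ with $b_n\in Y_0\cap Y_1$, $\ell_n\in(X_0+X_1)'$, and $\sum_n \max(\|\ell_n\|_{X_0'}\|b_n\|_{Y_0},\ \|\ell_n\|_{X_1'}\|b_n\|_{Y_1}) < 1+\varepsilon$. Then there exists a representation $y=\sum_{k\in\mathbb{Z}} y_k$ with $y_k\in Y_0\cap Y_1$ such that $\sum_{k} \frac{J(\lambda^k, y_k)}{K(\lambda^k, x)} \le \lambda(1+\varepsilon)$, where $J(t,y)=\max(\|y\|_{Y_0}, t\|y\|_{Y_1})$ and $K(t,x)$ is the K-functional of $x$ in $\bar X$ (assumed positive for all $t$). -/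
/-
Group the terms `ℓₙ(x) bₙ` of `y = Tx` into blocks according to the integer `k` with
`‖bₙ‖₀ ≤ λᵏ ‖bₙ‖₁ ≤ λ ‖bₙ‖₀`, and let `yₖ` be the sum of the `k`-th block. On that block
`J(λᵏ, bₙ) = λᵏ ‖bₙ‖₁`, while `|ℓₙ(x)| ≤ max(‖ℓₙ‖₀, λ⁻ᵏ ‖ℓₙ‖₁) K(λᵏ, x)`; multiplying,
`J(λᵏ, ℓₙ(x) bₙ) ≤ λ K(λᵏ, x) max(‖ℓₙ‖₀ ‖bₙ‖₀, ‖ℓₙ‖₁ ‖bₙ‖₁)`. Summing over the block (lower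
semicontinuity of the norms of `Y` passes the bound to the infinite sum) and then over `k`
gives `∑ₖ J(λᵏ, yₖ) / K(λᵏ, x) ≤ λ · (nuclear sum) ≤ λ (1 + ε)`.
-/

/-- The K-functional of a couple of seminorms `N0`, `N1` on a common space. -/
noncomputable def Kfun {E : Type*} [NormedAddCommGroup E] [NormedSpace ℝ E]
    (N0 N1 : Seminorm ℝ E) (t : ℝ) (x : E) : ℝ :=
  sInf {r : ℝ | ∃ x0 x1 : E, x = x0 + x1 ∧ r = N0 x0 + t * N1 x1}

def Jfun {E : Type*} [AddCommGroup E] [Module ℝ E] (N0 N1 : Seminorm ℝ E) (t : ℝ) (v : E) : ℝ :=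
  max (N0 v) (t * N1 v)

section Jfun

variable {E : Type*} [AddCommGroup E] [Module ℝ E] (N0 N1 : Seminorm ℝ E)

lemma Jfun_nonneg {t : ℝ} (v : E) : 0 ≤ Jfun N0 N1 t v :=
  (apply_nonneg N0 v).trans (le_max_left _ _)

lemma Jfun_smul (t c : ℝ) (v : E) : Jfun N0 N1 t (c • v) = |c| * Jfun N0 N1 t v := by
  simp only [Jfun, map_smul_eq_mul, Real.norm_eq_abs, mul_max_of_nonneg _ _ (abs_nonneg c)]
  ring_nf

end Jfun

lemma Seminorm.le_tsum_of_hasSum {𝕜 E ι : Type*} [SeminormedRing 𝕜] [AddCommGroup E]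
    [SMul 𝕜 E] [TopologicalSpace E] {p : Seminorm 𝕜 E} (hp : LowerSemicontinuous p)
    {f : ι → E} {s : E} (hf : HasSum f s) {g : ι → ℝ} (hg : Summable g)
    (hfg : ∀ i, p (f i) ≤ g i) : p s ≤ ∑' i, g i := by
  by_contra! hlt
  obtain ⟨F, hF⟩ := (hf.eventually (hp s _ hlt)).exists
  have hg0 : ∀ i, 0 ≤ g i := fun i => (apply_nonneg p _).trans (hfg i)
  refine hF.not_ge ?_
  calc p (∑ i ∈ F, f i) ≤ ∑ i ∈ F, p (f i) :=
        Finset.le_sum_of_subadditive _ (map_zero p).le (map_add_le_add p) F _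
    _ ≤ ∑ i ∈ F, g i := Finset.sum_le_sum fun i _ => hfg i
    _ ≤ ∑' i, g i := hg.sum_le_tsum F fun i _ => hg0 i

lemma Jfun_le_tsum_of_hasSum {E ι : Type*} [AddCommGroup E] [Module ℝ E] [TopologicalSpace E]
    {N0 N1 : Seminorm ℝ E} (h0 : LowerSemicontinuous N0) (h1 : LowerSemicontinuous N1)
    {t : ℝ} (ht : 0 < t) {f : ι → E} {s : E} (hf : HasSum f s) {g : ι → ℝ}
    (hg : Summable g) (hfg : ∀ i, Jfun N0 N1 t (f i) ≤ g i) :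
    Jfun N0 N1 t s ≤ ∑' i, g i := by
  refine max_le (N0.le_tsum_of_hasSum h0 hf hg fun i => (le_max_left _ _).trans (hfg i)) ?_
  rw [← le_div_iff₀' ht, ← tsum_div_const]
  refine N1.le_tsum_of_hasSum h1 hf (hg.div_const t) fun i => ?_
  rw [le_div_iff₀' ht]
  exact (le_max_right _ _).trans (hfg i)

lemma Kfun_nonneg {E : Type*} [NormedAddCommGroup E] [NormedSpace ℝ E]
    {N0 N1 : Seminorm ℝ E} {t : ℝ} (ht : 0 ≤ t) (x : E) : 0 ≤ Kfun N0 N1 t x :=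
  le_csInf ⟨_, x, 0, (add_zero x).symm, rfl⟩ fun _ ⟨_, _, _, hr⟩ => hr ▸ by positivity

lemma abs_apply_le_mul_Kfun {E : Type*} [NormedAddCommGroup E] [NormedSpace ℝ E]
    {N0 N1 : Seminorm ℝ E} (ℓ : E →L[ℝ] ℝ) {m0 m1 t : ℝ} (hm0 : 0 ≤ m0) (ht : 0 < t)
    (hℓ0 : ∀ a, |ℓ a| ≤ m0 * N0 a) (hℓ1 : ∀ a, |ℓ a| ≤ m1 * N1 a) (x : E) :
    |ℓ x| ≤ max m0 (t⁻¹ * m1) * Kfun N0 N1 t x := by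
  have hc : 0 ≤ max m0 (t⁻¹ * m1) := hm0.trans (le_max_left _ _)
  rw [Kfun, ← smul_eq_mul, ← Real.sInf_smul_of_nonneg hc]
  refine le_csInf ⟨_, Set.smul_mem_smul_set ⟨x, 0, (add_zero x).symm, rfl⟩⟩ ?_
  rintro _ ⟨_, ⟨x0, x1, rfl, rfl⟩, rfl⟩
  have hm1 : m1 ≤ t * max m0 (t⁻¹ * m1) := by
    rw [← inv_mul_le_iff₀ ht]; exact le_max_right _ _
  calc |ℓ (x0 + x1)| ≤ |ℓ x0| + |ℓ x1| := by rw [map_add]; exact abs_add_le _ _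
    _ ≤ m0 * N0 x0 + m1 * N1 x1 := add_le_add (hℓ0 x0) (hℓ1 x1)
    _ ≤ max m0 (t⁻¹ * m1) * N0 x0 + t * max m0 (t⁻¹ * m1) * N1 x1 := by
        gcongr
        exact le_max_left _ _
    _ = max m0 (t⁻¹ * m1) • (N0 x0 + t * N1 x1) := by rw [smul_eq_mul]; ring

lemma max_mul_max_le_of_block {m0 m1 a c t lam : ℝ} (hm0 : 0 ≤ m0) (hc : 0 ≤ c)
    (ht : 0 < t) (hlam : 1 ≤ lam) (hlow : a ≤ t * c) (hup : t * c ≤ lam * a) :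
    max m0 (t⁻¹ * m1) * max a (t * c) ≤ lam * max (m0 * a) (m1 * c) := by
  have ha : 0 ≤ a := nonneg_of_mul_nonneg_right (hup.trans' (by positivity)) (by linarith)
  rw [max_eq_right hlow, max_mul_of_nonneg _ _ (by positivity)]
  refine max_le ?_ ?_
  · calc m0 * (t * c) ≤ lam * (m0 * a) := by nlinarith
      _ ≤ lam * max (m0 * a) (m1 * c) := by gcongr; exact le_max_left _ _
  · calc t⁻¹ * m1 * (t * c) = m1 * c := by field_simp
      _ ≤ max (m0 * a) (m1 * c) := le_max_right _ _
      _ ≤ lam * max (m0 * a) (m1 * c) :=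
        le_mul_of_one_le_left ((mul_nonneg hm0 ha).trans (le_max_left _ _)) hlam

lemma exists_zpow_block {a c lam : ℝ} (ha : 0 < a) (hc : 0 < c) (hlam : 1 < lam) :
    ∃ k : ℤ, a ≤ lam ^ k * c ∧ lam ^ k * c ≤ lam * a := by
  obtain ⟨n, hn_lt, hn_le⟩ := exists_mem_Ioc_zpow (div_pos ha hc) hlam
  refine ⟨n + 1, (div_le_iff₀ hc).1 hn_le, ?_⟩
  rw [zpow_add_one₀ (by positivity), mul_comm _ lam, mul_assoc]
  exact mul_le_mul_of_nonneg_left ((lt_div_iff₀ hc).1 hn_lt).le (by positivity)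

lemma Jfun_apply_smul_le {X Y : Type*} [NormedAddCommGroup X] [NormedSpace ℝ X]
    [AddCommGroup Y] [Module ℝ Y] {NX0 NX1 : Seminorm ℝ X} {NY0 NY1 : Seminorm ℝ Y}
    (ℓ : X →L[ℝ] ℝ) {m0 m1 t lam : ℝ} (hm0 : 0 ≤ m0) (ht : 0 < t) (hlam : 1 ≤ lam)
    (hℓ0 : ∀ a, |ℓ a| ≤ m0 * NX0 a) (hℓ1 : ∀ a, |ℓ a| ≤ m1 * NX1 a) (x : X) {v : Y}
    (hlow : NY0 v ≤ t * NY1 v) (hup : t * NY1 v ≤ lam * NY0 v) :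
    Jfun NY0 NY1 t (ℓ x • v) ≤ lam * Kfun NX0 NX1 t x * max (m0 * NY0 v) (m1 * NY1 v) := by
  calc Jfun NY0 NY1 t (ℓ x • v) = |ℓ x| * Jfun NY0 NY1 t v := Jfun_smul _ _ _ _ _
    _ ≤ max m0 (t⁻¹ * m1) * Kfun NX0 NX1 t x * Jfun NY0 NY1 t v :=
        mul_le_mul_of_nonneg_right (abs_apply_le_mul_Kfun ℓ hm0 ht hℓ0 hℓ1 x) (Jfun_nonneg _ _ _)
    _ = Kfun NX0 NX1 t x * (max m0 (t⁻¹ * m1) * Jfun NY0 NY1 t v) := by ring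
    _ ≤ Kfun NX0 NX1 t x * (lam * max (m0 * NY0 v) (m1 * NY1 v)) :=
        mul_le_mul_of_nonneg_left
          (max_mul_max_le_of_block hm0 (apply_nonneg _ _) ht hlam hlow hup) (Kfun_nonneg ht.le x)
    _ = lam * Kfun NX0 NX1 t x * max (m0 * NY0 v) (m1 * NY1 v) := by ring

theorem stmt_12_general {X Y : Type*} [NormedAddCommGroup X] [NormedSpace ℝ X]
    [NormedAddCommGroup Y] [NormedSpace ℝ Y] [CompleteSpace Y]
    (NX0 NX1 : Seminorm ℝ X) (NY0 NY1 : Seminorm ℝ Y)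
    (hlsc0 : LowerSemicontinuous fun v : Y => (NY0 v : ℝ))
    (hlsc1 : LowerSemicontinuous fun v : Y => (NY1 v : ℝ))
    (hdom0 : ∀ v : Y, ‖v‖ ≤ NY0 v) (hdom1 : ∀ v : Y, ‖v‖ ≤ NY1 v)
    (lam ε : ℝ) (hlam : 1 < lam)
    (ℓ : ℕ → X →L[ℝ] ℝ) (b : ℕ → Y) (M0 M1 : ℕ → ℝ)
    (hM0nn : ∀ n, 0 ≤ M0 n)
    (hM0 : ∀ n a, |ℓ n a| ≤ M0 n * NX0 a) (hM1 : ∀ n a, |ℓ n a| ≤ M1 n * NX1 a)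
    (hnucS : Summable fun n => max (M0 n * NY0 (b n)) (M1 n * NY1 (b n)))
    (hnuc : (∑' n, max (M0 n * NY0 (b n)) (M1 n * NY1 (b n))) < 1 + ε)
    (x : X) (y : Y) (hy : HasSum (fun n => ℓ n x • b n) y)
    (hK : ∀ k : ℤ, 0 < Kfun NX0 NX1 (lam ^ k) x) :
    ∃ yk : ℤ → Y, HasSum yk y ∧
      Summable (fun k : ℤ =>
        max (NY0 (yk k)) (lam ^ k * NY1 (yk k)) / Kfun NX0 NX1 (lam ^ k) x) ∧
      (∑' k : ℤ, max (NY0 (yk k)) (lam ^ k * NY1 (yk k)) / Kfun NX0 NX1 (lam ^ k) x)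
        ≤ lam * (1 + ε) := by
  have hlam0 : 0 < lam := one_pos.trans hlam
  have hblock : ∀ n, ∃ k : ℤ,
      NY0 (b n) ≤ lam ^ k * NY1 (b n) ∧ lam ^ k * NY1 (b n) ≤ lam * NY0 (b n) := by
    intro n
    by_cases hb : b n = 0
    · exact ⟨0, by simp [hb]⟩
    · have hb' := norm_pos_iff.2 hb
      exact exists_zpow_block (hb'.trans_le (hdom0 _)) (hb'.trans_le (hdom1 _)) hlam
  choose κ hκ using hblock
  set g : ℕ → ℝ := fun n => max (M0 n * NY0 (b n)) (M1 n * NY1 (b n))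
  set yk : ℤ → Y := fun k => ∑' n : κ ⁻¹' {k}, ℓ n x • b n
  set S : ℤ → ℝ := fun k => ∑' n : κ ⁻¹' {k}, g n
  have hS : HasSum S (∑' n, g n) := hnucS.hasSum.tsum_fiberwise κ
  have hJ : ∀ k, Jfun NY0 NY1 (lam ^ k) (yk k) / Kfun NX0 NX1 (lam ^ k) x ≤ lam * S k := by
    intro k
    rw [div_le_iff₀ (hK k), mul_right_comm, ← tsum_mul_left]
    refine Jfun_le_tsum_of_hasSum hlsc0 hlsc1 (zpow_pos hlam0 k)
      (hy.summable.subtype _).hasSum ((hnucS.subtype _).mul_left _) fun ⟨n, hn⟩ => ?_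
    obtain rfl : κ n = k := hn
    exact Jfun_apply_smul_le (ℓ n) (hM0nn n) (zpow_pos hlam0 _) hlam.le (hM0 n) (hM1 n) x
      (hκ n).1 (hκ n).2
  have hJS : Summable fun k => lam * S k := hS.summable.mul_left lam
  have hJsum := Summable.of_nonneg_of_le
    (fun k => div_nonneg (Jfun_nonneg _ _ _) (hK k).le) hJ hJS
  refine ⟨yk, hy.tsum_fiberwise κ, hJsum, ?_⟩
  calc _ ≤ ∑' k, lam * S k := hJsum.tsum_le_tsum hJ hJS
    _ = lam * ∑' n, g n := by rw [tsum_mul_left, hS.tsum_eq]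
    _ ≤ lam * (1 + ε) := by gcongr

/-- the image `y = Tx` of `x` under a nuclear operator of nuclear norm
`< 1+ε` has a representation `y = ∑ₖ yₖ` with `∑ₖ J(λᵏ,yₖ)/K(λᵏ,x) ≤ λ(1+ε)`. -/
theorem stmt_12 {X Y : Type*} [NormedAddCommGroup X] [NormedSpace ℝ X]
    [NormedAddCommGroup Y] [NormedSpace ℝ Y] [CompleteSpace Y]
    (NX0 NX1 : Seminorm ℝ X) (NY0 NY1 : Seminorm ℝ Y)
    (hlsc0 : LowerSemicontinuous fun v : Y => (NY0 v : ℝ))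
    (hlsc1 : LowerSemicontinuous fun v : Y => (NY1 v : ℝ))
    (hdom0 : ∀ v : Y, ‖v‖ ≤ NY0 v) (hdom1 : ∀ v : Y, ‖v‖ ≤ NY1 v)
    (lam ε : ℝ) (hlam : 1 < lam) (hε : 0 < ε)
    (ℓ : ℕ → X →L[ℝ] ℝ) (b : ℕ → Y) (M0 M1 : ℕ → ℝ)
    (hM0nn : ∀ n, 0 ≤ M0 n) (hM1nn : ∀ n, 0 ≤ M1 n)
    (hM0 : ∀ n a, |ℓ n a| ≤ M0 n * NX0 a) (hM1 : ∀ n a, |ℓ n a| ≤ M1 n * NX1 a)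
    (hnucS : Summable fun n => max (M0 n * NY0 (b n)) (M1 n * NY1 (b n)))
    (hnuc : (∑' n, max (M0 n * NY0 (b n)) (M1 n * NY1 (b n))) < 1 + ε)
    (x : X) (y : Y) (hy : HasSum (fun n => ℓ n x • b n) y)
    (hK : ∀ k : ℤ, 0 < Kfun NX0 NX1 (lam ^ k) x) :
    ∃ yk : ℤ → Y, HasSum yk y ∧
      Summable (fun k : ℤ =>
        max (NY0 (yk k)) (lam ^ k * NY1 (yk k)) / Kfun NX0 NX1 (lam ^ k) x) ∧
      (∑' k : ℤ, max (NY0 (yk k)) (lam ^ k * NY1 (yk k)) / Kfun NX0 NX1 (lam ^ k) x)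
        ≤ lam * (1 + ε) :=
  stmt_12_general NX0 NX1 NY0 NY1 hlsc0 hlsc1 hdom0 hdom1 lam ε hlam ℓ b M0 M1 hM0nn hM0 hM1 hnucS
    hnuc x y hy hK
end

section
/- Let $\bar X=(X_0,X_1)$, $\bar Y=(Y_0,Y_1)$ be Banach couples, $\lambda>1$, and $x\in X_0+X_1$ with $K(\lambda^k,x)>0$ for all $k\in\mathbb{Z}$. Suppose $y\in Y_0+Y_1$ has a representation $y=\sum_{k\in\mathbb{Z}} y_k$ ($y_k\in Y_0\cap Y_1$, convergence in $Y_0+Y_1$) with $\sum_k \frac{J(\lambda^k,y_k)}{K(\lambda^k,x)} < 1+\varepsilon$. Then there exists a linear operator $T: X_0+X_1 \to Y_0+Y_1$ of the form $Ta=\sum_k \ell_k(a)\,y_k$ with continuous linear functionals $\ell_k$ on $X_0+X_1$, such that $Tx=y$ and $\sum_k \max_{i=0,1} \|\ell_k\|_{X_i'}\,\|y_k\|_{Y_i} < 1+\varepsilon$ (so $T$ is nuclear from $\bar X$ to $\bar Y$ with nuclear norm $<1+\varepsilon$). -/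
namespace Seminorm

variable {E : Type*} [AddCommGroup E] [Module ℝ E]

theorem exists_dual_eq_abs_le (p : Seminorm ℝ E) (x : E) :
    ∃ g : Module.Dual ℝ E, g x = p x ∧ ∀ a, |g a| ≤ p a := by
  let f := LinearPMap.mkSpanSingleton' (σ := RingHom.id ℝ) x (p x) fun c hc => by
    rcases smul_eq_zero.1 hc with rfl | rfl <;> simp
  obtain ⟨g, hgf, hgp⟩ := Module.Dual.exists_extension_of_le_seminorm_real (p := p) _ f.toFun <| by
    rintro ⟨_, hz⟩
    obtain ⟨c, rfl⟩ := Submodule.mem_span_singleton.1 hz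
    change f ⟨c • x, hz⟩ ≤ p (c • x)
    rw [LinearPMap.mkSpanSingleton'_apply, map_smul_eq_mul, Real.norm_eq_abs]
    exact mul_le_mul_of_nonneg_right (le_abs_self c) (apply_nonneg p x)
  exact ⟨g, (hgf ⟨x, Submodule.mem_span_singleton_self x⟩).trans
    (LinearPMap.mkSpanSingleton'_apply_self _ _ _ _), hgp⟩

theorem exists_dual_eq_one_abs_le_div (p : Seminorm ℝ E) {x : E} (hx : 0 < p x) :
    ∃ ℓ : Module.Dual ℝ E, ℓ x = 1 ∧ ∀ a, |ℓ a| ≤ p a / p x := by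
  obtain ⟨g, hgx, hgp⟩ := p.exists_dual_eq_abs_le x
  refine ⟨(p x)⁻¹ • g, by simp [hgx, hx.ne'], fun a => ?_⟩
  rw [LinearMap.smul_apply, smul_eq_mul, abs_mul, abs_inv, abs_of_pos hx, inv_mul_eq_div]
  exact div_le_div_of_nonneg_right (hgp a) hx.le

end Seminorm

section Kfun

variable {E : Type*} [NormedAddCommGroup E] [NormedSpace ℝ E] (N0 N1 : Seminorm ℝ E) {t : ℝ}

theorem Kfun_eq_inf_apply (ht : 0 ≤ t) (a : E) :
    Kfun N0 N1 t a = (N0 ⊓ t.toNNReal • N1) a := by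
  rw [Kfun, Seminorm.inf_apply, iInf]
  congr 1
  ext r
  simp only [smul_apply, NNReal.smul_def, Real.coe_toNNReal t ht, smul_eq_mul,
    Set.mem_range, Set.mem_ofPred_eq]
  constructor
  · rintro ⟨x0, x1, rfl, rfl⟩
    exact ⟨x0, by rw [add_sub_cancel_left]⟩
  · rintro ⟨u, rfl⟩
    exact ⟨u, a - u, (add_sub_cancel u a).symm, rfl⟩

theorem Kfun_le_left (ht : 0 ≤ t) (a : E) : Kfun N0 N1 t a ≤ N0 a := by
  rw [Kfun_eq_inf_apply N0 N1 ht]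
  exact inf_le_left (a := N0) a

theorem Kfun_le_right (ht : 0 ≤ t) (a : E) : Kfun N0 N1 t a ≤ t * N1 a := by
  rw [Kfun_eq_inf_apply N0 N1 ht]
  refine (inf_le_right (a := N0) a).trans_eq ?_
  rw [smul_apply, NNReal.smul_def, Real.coe_toNNReal t ht, smul_eq_mul]

theorem exists_dual_eq_one_abs_le_Kfun_div (ht : 0 ≤ t) {x : E} (hx : 0 < Kfun N0 N1 t x) :
    ∃ ℓ : Module.Dual ℝ E, ℓ x = 1 ∧ ∀ a, |ℓ a| ≤ Kfun N0 N1 t a / Kfun N0 N1 t x := by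
  simp only [Kfun_eq_inf_apply N0 N1 ht] at hx ⊢
  exact Seminorm.exists_dual_eq_one_abs_le_div _ hx

end Kfun

theorem summable_smul_of_abs_le_mul {ι Y : Type*} [NormedAddCommGroup Y] [NormedSpace ℝ Y]
    [CompleteSpace Y] (N : Seminorm ℝ Y) (hN : ∀ v, ‖v‖ ≤ N v) {c M : ι → ℝ} {y : ι → Y} {C : ℝ}
    (hc : ∀ k, |c k| ≤ M k * C) (hs : Summable fun k => M k * N (y k)) :
    Summable fun k => c k • y k := by
  refine (hs.mul_right C).of_norm_bounded fun k => ?_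
  rw [norm_smul, Real.norm_eq_abs]
  calc |c k| * ‖y k‖ ≤ M k * C * N (y k) :=
        mul_le_mul (hc k) (hN _) (norm_nonneg _) ((abs_nonneg _).trans (hc k))
    _ = M k * N (y k) * C := by ring

theorem stmt_13_general {X Y : Type*} [NormedAddCommGroup X] [NormedSpace ℝ X]
    [NormedAddCommGroup Y] [NormedSpace ℝ Y] [CompleteSpace Y]
    (NX0 NX1 : Seminorm ℝ X) (NY0 NY1 : Seminorm ℝ Y)
    (hdom0 : ∀ v : Y, ‖v‖ ≤ NY0 v)
    (lam ε : ℝ) (hlam : 1 < lam)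
    (x : X) (hK : ∀ k : ℤ, 0 < Kfun NX0 NX1 (lam ^ k) x)
    (y : Y) (yk : ℤ → Y) (hy : HasSum yk y)
    (hrepS : Summable fun k : ℤ =>
      max (NY0 (yk k)) (lam ^ k * NY1 (yk k)) / Kfun NX0 NX1 (lam ^ k) x)
    (hrep : (∑' k : ℤ, max (NY0 (yk k)) (lam ^ k * NY1 (yk k)) / Kfun NX0 NX1 (lam ^ k) x)
      < 1 + ε) :
    ∃ (ℓ : ℤ → X →ₗ[ℝ] ℝ) (M0 M1 : ℤ → ℝ),
      (∀ k, ℓ k x = 1) ∧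
      (∀ k a, |ℓ k a| ≤ Kfun NX0 NX1 (lam ^ k) a / Kfun NX0 NX1 (lam ^ k) x) ∧
      (∀ k a, |ℓ k a| ≤ M0 k * NX0 a) ∧ (∀ k a, |ℓ k a| ≤ M1 k * NX1 a) ∧
      (∀ a : X, Summable fun k : ℤ => ℓ k a • yk k) ∧
      HasSum (fun k : ℤ => ℓ k x • yk k) y ∧
      Summable (fun k : ℤ => max (M0 k * NY0 (yk k)) (M1 k * NY1 (yk k))) ∧
      (∑' k : ℤ, max (M0 k * NY0 (yk k)) (M1 k * NY1 (yk k))) < 1 + ε := by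
  have ht (k : ℤ) : 0 ≤ lam ^ k := zpow_nonneg (by linarith) k
  set Kx : ℤ → ℝ := fun k => Kfun NX0 NX1 (lam ^ k) x
  choose ℓ hℓx hℓK using fun k => exists_dual_eq_one_abs_le_Kfun_div NX0 NX1 (ht k) (hK k)
  have hℓ0 (k : ℤ) (a : X) : |ℓ k a| ≤ (Kx k)⁻¹ * NX0 a := by
    rw [inv_mul_eq_div]
    exact (hℓK k a).trans (div_le_div_of_nonneg_right (Kfun_le_left NX0 NX1 (ht k) a) (hK k).le)
  have hℓ1 (k : ℤ) (a : X) : |ℓ k a| ≤ lam ^ k / Kx k * NX1 a := by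
    rw [div_mul_eq_mul_div]
    exact (hℓK k a).trans (div_le_div_of_nonneg_right (Kfun_le_right NX0 NX1 (ht k) a) (hK k).le)
  have hJ : (fun k => max ((Kx k)⁻¹ * NY0 (yk k)) (lam ^ k / Kx k * NY1 (yk k))) =
      fun k => max (NY0 (yk k)) (lam ^ k * NY1 (yk k)) / Kx k := by
    funext k
    rw [inv_mul_eq_div, div_mul_eq_mul_div, max_div_div_right (hK k).le]
  rw [← hJ] at hrepS hrep
  have hs0 : Summable fun k => (Kx k)⁻¹ * NY0 (yk k) :=
    hrepS.of_nonneg_of_le (fun k => mul_nonneg (inv_nonneg.2 (hK k).le) (apply_nonneg _ _))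
      fun k => le_max_left _ _
  exact ⟨ℓ, fun k => (Kx k)⁻¹, fun k => lam ^ k / Kx k, hℓx, hℓK, hℓ0, hℓ1,
    fun a => summable_smul_of_abs_le_mul NY0 hdom0 (hℓ0 · a) hs0, by simpa [hℓx] using hy,
    hrepS, hrep⟩

/-- from a representation `y = ∑ₖ yₖ` with `∑ J(λᵏ,yₖ)/K(λᵏ,x) < 1+ε` one
builds a nuclear operator `T a = ∑ₖ ℓₖ(a)·yₖ` with `Tx = y` and nuclear norm `< 1+ε`. -/
theorem stmt_13 {X Y : Type*} [NormedAddCommGroup X] [NormedSpace ℝ X]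
    [NormedAddCommGroup Y] [NormedSpace ℝ Y] [CompleteSpace Y]
    (NX0 NX1 : Seminorm ℝ X) (NY0 NY1 : Seminorm ℝ Y)
    (hdom0 : ∀ v : Y, ‖v‖ ≤ NY0 v) (hdom1 : ∀ v : Y, ‖v‖ ≤ NY1 v)
    (lam ε : ℝ) (hlam : 1 < lam) (hε : 0 < ε)
    (x : X) (hK : ∀ k : ℤ, 0 < Kfun NX0 NX1 (lam ^ k) x)
    (y : Y) (yk : ℤ → Y) (hy : HasSum yk y)
    (hrepS : Summable fun k : ℤ =>
      max (NY0 (yk k)) (lam ^ k * NY1 (yk k)) / Kfun NX0 NX1 (lam ^ k) x)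
    (hrep : (∑' k : ℤ, max (NY0 (yk k)) (lam ^ k * NY1 (yk k)) / Kfun NX0 NX1 (lam ^ k) x)
      < 1 + ε) :
    ∃ (ℓ : ℤ → X →ₗ[ℝ] ℝ) (M0 M1 : ℤ → ℝ),
      (∀ k, ℓ k x = 1) ∧
      (∀ k a, |ℓ k a| ≤ Kfun NX0 NX1 (lam ^ k) a / Kfun NX0 NX1 (lam ^ k) x) ∧
      (∀ k a, |ℓ k a| ≤ M0 k * NX0 a) ∧ (∀ k a, |ℓ k a| ≤ M1 k * NX1 a) ∧
      (∀ a : X, Summable fun k : ℤ => ℓ k a • yk k) ∧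
      HasSum (fun k : ℤ => ℓ k x • yk k) y ∧
      Summable (fun k : ℤ => max (M0 k * NY0 (yk k)) (M1 k * NY1 (yk k))) ∧
      (∑' k : ℤ, max (M0 k * NY0 (yk k)) (M1 k * NY1 (yk k))) < 1 + ε :=
  stmt_13_general NX0 NX1 NY0 NY1 hdom0 lam ε hlam x hK y yk hy hrepS hrep
end
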